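/- arXiv:math/0703006 — 5 statements merged into one kernel-verified Lean document; each statement's English description precedes it below -/
import Mathlib

section
/- Let Ω ⊆ ℂ be a domain (connected open set) and let f_j : Ω → ℂ be a sequence of holomorphic functions converging pointwise on Ω to a function f. Then there exists a dense open subset V ⊆ Ω such that f is holomorphic on V (i.e., differentiable at every point of V). -/
open Filter Topology

theorem pointwise_limit_holomorphic_on_dense_open
    (Ω : Set ℂ) (hΩopen : IsOpen Ω) (hΩconn : IsConnected Ω)
    (f : ℕ → ℂ → ℂ) (hf : ∀ j, DifferentiableOn ℂ (f j) Ω)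
    (g : ℂ → ℂ)
    (hlim : ∀ z ∈ Ω, Tendsto (fun j => f j z) atTop (𝓝 (g z))) :
    ∃ V : Set ℂ, V ⊆ Ω ∧ IsOpen V ∧ Ω ⊆ closure V ∧ DifferentiableOn ℂ g V := by
  classical
  -- the sets where the family is uniformly bounded by `n`
  set E : ℕ → Set ℂ := fun n => {z | ∀ j, ‖f j z‖ ≤ n} with hE
  -- every point of Ω lies in some E n, since convergent sequences are bounded
  have hcover : ∀ z ∈ Ω, ∃ n : ℕ, z ∈ E n := by
    intro z hz
    have h1 : Tendsto (fun j => ‖f j z‖) atTop (𝓝 ‖g z‖) := (hlim z hz).norm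
    have h2 : BddAbove (Set.range fun j => ‖f j z‖) := h1.bddAbove_range
    obtain ⟨C, hC⟩ := h2
    obtain ⟨n, hn⟩ := exists_nat_ge C
    exact ⟨n, fun j => le_trans (hC (Set.mem_range_self j)) hn⟩
  -- E n intersected with a compact subset of Ω is closed
  have hEclosed : ∀ (n : ℕ) (B : Set ℂ), IsClosed B → B ⊆ Ω → IsClosed (E n ∩ B) := by
    intro n B hBcl hBΩ
    have : E n ∩ B = ⋂ j : ℕ, B ∩ (fun w => ‖f j w‖) ⁻¹' Set.Iic (n : ℝ) := by
      ext w
      simp only [hE, Set.mem_inter_iff, Set.mem_setOf_eq, Set.mem_preimage, Set.mem_Iic]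
      constructor
      · rintro ⟨hwE, hwB⟩
        exact Set.mem_iInter.mpr fun j => ⟨hwB, hwE j⟩
      · intro hw
        have h := Set.mem_iInter.mp hw
        exact ⟨fun j => (h j).2, (h 0).1⟩
    rw [this]
    refine isClosed_iInter fun j => ?_
    exact ContinuousOn.preimage_isClosed_of_isClosed
      (((hf j).continuousOn.mono hBΩ).norm) hBcl isClosed_Iic
  -- the candidate set
  refine ⟨Ω ∩ ⋃ n, interior (E n), Set.inter_subset_left, ?_, ?_, ?_⟩
  · exact hΩopen.inter (isOpen_iUnion fun n => isOpen_interior)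
  · -- density, via Baire category in small closed balls
    intro z hz
    rw [Metric.mem_closure_iff]
    intro ε hε
    obtain ⟨δ, hδpos, hδΩ⟩ := Metric.isOpen_iff.mp hΩopen z hz
    set ε' : ℝ := min (ε / 2) (δ / 2) with hε'
    have hε'pos : 0 < ε' := lt_min (by linarith) (by linarith)
    set B : Set ℂ := Metric.closedBall z ε' with hB
    have hBΩ : B ⊆ Ω := by
      intro w hw
      apply hδΩ
      have h1 : dist w z ≤ ε' := Metric.mem_closedBall.mp hw
      have h2 : ε' ≤ δ / 2 := min_le_right _ _
      exact Metric.mem_ball.mpr (by linarith)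
    have hBcl : IsClosed B := Metric.isClosed_closedBall
    haveI : CompleteSpace B := hBcl.completeSpace_coe
    haveI : Nonempty B := ⟨⟨z, Metric.mem_closedBall_self hε'pos.le⟩⟩
    -- the preimages in the subtype
    set A : ℕ → Set B := fun n => (↑) ⁻¹' (E n) with hA
    have hAclosed : ∀ n, IsClosed (A n) := by
      intro n
      have : A n = (↑) ⁻¹' (E n ∩ B) := by
        ext x
        simp [hA, x.2]
      rw [this]
      exact (hEclosed n B hBcl hBΩ).preimage continuous_subtype_val
    have hAcover : ⋃ n, A n = Set.univ := by
      ext x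
      simp only [Set.mem_iUnion, Set.mem_univ, iff_true, hA, Set.mem_preimage]
      exact hcover _ (hBΩ x.2)
    obtain ⟨n, x, hx⟩ := nonempty_interior_of_iUnion_of_closed hAclosed hAcover
    obtain ⟨O, hOopen, hOeq⟩ := isOpen_induced_iff.mp (isOpen_interior (s := A n))
    have hxO : (x : ℂ) ∈ O := by
      rw [← hOeq] at hx; exact hx
    have hOA : ∀ w : ℂ, w ∈ B → w ∈ O → w ∈ E n := by
      intro w hwB hwO
      have : (⟨w, hwB⟩ : B) ∈ (↑) ⁻¹' O := hwO
      rw [hOeq] at this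
      have h2 : (⟨w, hwB⟩ : B) ∈ A n := interior_subset this
      exact h2
    -- x is in the closure of the open ball, so O meets the open ball
    have hxcl : (x : ℂ) ∈ closure (Metric.ball z ε') := by
      rw [closure_ball z hε'pos.ne']
      exact x.2
    obtain ⟨y, hyO, hyball⟩ := _root_.mem_closure_iff.mp hxcl O hOopen hxO
    have hyB : y ∈ B := Metric.ball_subset_closedBall hyball
    have hyint : y ∈ interior (E n) := by
      refine mem_interior.mpr ⟨O ∩ Metric.ball z ε', ?_, hOopen.inter Metric.isOpen_ball,
        ⟨hyO, hyball⟩⟩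
      intro w hw
      exact hOA w (Metric.ball_subset_closedBall hw.2) hw.1
    refine ⟨y, ⟨hBΩ hyB, Set.mem_iUnion.mpr ⟨n, hyint⟩⟩, ?_⟩
    have : dist y z < ε' := hyball
    calc dist z y = dist y z := dist_comm z y
      _ < ε' := this
      _ ≤ ε / 2 := min_le_left _ _
      _ < ε := by linarith
  · -- differentiability on V
    intro z₀ hz₀
    obtain ⟨hz₀Ω, hz₀U⟩ := hz₀
    obtain ⟨n, hz₀n⟩ := Set.mem_iUnion.mp hz₀U
    have hWopen : IsOpen (interior (E n) ∩ Ω) := isOpen_interior.inter hΩopen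
    obtain ⟨r', hr'pos, hr'sub⟩ := Metric.isOpen_iff.mp hWopen z₀ ⟨hz₀n, hz₀Ω⟩
    set r : ℝ := r' / 2 with hr
    have hrpos : 0 < r := by positivity
    have hsub : Metric.closedBall z₀ r ⊆ interior (E n) ∩ Ω := by
      refine subset_trans ?_ hr'sub
      intro w hw
      exact Metric.mem_ball.mpr (lt_of_le_of_lt (Metric.mem_closedBall.mp hw) (by linarith))
    have hsubΩ : Metric.closedBall z₀ r ⊆ Ω := fun w hw => (hsub hw).2
    have hbound : ∀ (j : ℕ) (w : ℂ), w ∈ Metric.closedBall z₀ r → ‖f j w‖ ≤ n :=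
      fun j w hw => interior_subset (hsub hw).1 j
    set ρ : ℝ := r / 2 with hρ
    have hρpos : 0 < ρ := by positivity
    set K : Set ℂ := Metric.closedBall z₀ ρ with hK
    have hKsub : K ⊆ Metric.closedBall z₀ r :=
      Metric.closedBall_subset_closedBall (by linarith)
    have hKΩ : K ⊆ Ω := fun w hw => hsubΩ (hKsub hw)
    -- Cauchy estimate for derivatives on K
    have hderiv : ∀ (j : ℕ) (w : ℂ), w ∈ K → ‖deriv (f j) w‖ ≤ n / ρ := by
      intro j w hw
      have hball : Metric.closedBall w ρ ⊆ Metric.closedBall z₀ r := by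
        intro u hu
        have h1 : dist u w ≤ ρ := Metric.mem_closedBall.mp hu
        have h2 : dist w z₀ ≤ ρ := Metric.mem_closedBall.mp hw
        exact Metric.mem_closedBall.mpr
          (le_trans (dist_triangle u w z₀) (by rw [hρ] at h1 h2; linarith))
      have hd : DiffContOnCl ℂ (f j) (Metric.ball w ρ) := by
        have : DifferentiableOn ℂ (f j) (closure (Metric.ball w ρ)) := by
          rw [closure_ball w hρpos.ne']
          exact (hf j).mono (subset_trans hball hsubΩ)
        exact this.diffContOnCl
      refine Complex.norm_deriv_le_of_forall_mem_sphere_norm_le hρpos hd fun u hu => ?_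
      exact hbound j u (hball (Metric.sphere_subset_closedBall hu))
    -- Lipschitz estimate on K, uniform in j
    set C : ℝ := n / ρ with hC
    have hCnonneg : 0 ≤ C := div_nonneg (Nat.cast_nonneg n) hρpos.le
    have hlip : ∀ (j : ℕ) (x y : ℂ), x ∈ K → y ∈ K → dist (f j x) (f j y) ≤ C * dist x y := by
      intro j x y hx hy
      rw [dist_eq_norm, dist_eq_norm]
      refine Convex.norm_image_sub_le_of_norm_deriv_le (fun u hu => ?_) (hderiv j) 
        (convex_closedBall z₀ ρ) hy hx
      exact (hf j).differentiableAt (hΩopen.mem_nhds (hKΩ hu))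
    -- the restricted family is equicontinuous
    haveI : CompactSpace K := isCompact_iff_compactSpace.mp (isCompact_closedBall z₀ ρ)
    set F : ℕ → K → ℂ := fun j x => f j x with hF
    have hequi : Equicontinuous F := by
      refine Metric.equicontinuous_of_continuity_modulus (fun t => C * t) ?_ F ?_
      · have : Continuous fun t : ℝ => C * t := continuous_const.mul continuous_id
        simpa using this.tendsto 0
      · intro x y j
        rw [Subtype.dist_eq]
        exact hlip j x y x.2 y.2
    -- pointwise convergence of the restricted family
    have hptwise : Tendsto F atTop (𝓝 (K.restrict g)) := by
      rw [tendsto_pi_nhds]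
      exact fun x => hlim x (hKΩ x.2)
    -- hence uniform convergence on K
    have huf : TendstoUniformly F (K.restrict g) atTop := by
      have h := (hequi.tendsto_uniformFun_iff_pi atTop (K.restrict g)).mpr hptwise
      exact UniformFun.tendsto_iff_tendstoUniformly.mp h
    have hUK : TendstoUniformlyOn f g atTop K :=
      (tendstoUniformlyOn_iff_tendstoUniformly_comp_coe).mpr huf
    -- hence g is differentiable on the open ball
    have hball_sub : Metric.ball z₀ ρ ⊆ K := Metric.ball_subset_closedBall
    have hlu : TendstoLocallyUniformlyOn f g atTop (Metric.ball z₀ ρ) :=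
      (hUK.mono hball_sub).tendstoLocallyUniformlyOn
    have hgd : DifferentiableOn ℂ g (Metric.ball z₀ ρ) := by
      refine hlu.differentiableOn (Filter.Eventually.of_forall fun j => ?_) Metric.isOpen_ball
      exact (hf j).mono fun w hw => hKΩ (hball_sub hw)
    exact (hgd.differentiableAt (Metric.isOpen_ball.mem_nhds
      (Metric.mem_ball_self hρpos))).differentiableWithinAt
end

section
/- Hopf lemma for the disc: Let u be a real-valued function on the closed unit disc D̄ ⊆ ℝ², continuous on D̄, harmonic and nonconstant on D, with u > 0 on D and u(P) = 0 at a boundary point P. Then there exists c' > 0 such that for all r < 1 close enough to 1, (u(rP) - u(P))/(r-1) ≤ -c'; in particular the outward normal derivative of u at P, if it exists, is strictly negative. -/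
open Metric

/-- The Laplacian of a function `u : ℂ → ℝ`, identifying `ℂ` with `ℝ²`:
`Δu = ∂²u/∂x² + ∂²u/∂y²`. -/
noncomputable def laplacian (u : ℂ → ℝ) (z : ℂ) : ℝ :=
  fderiv ℝ (fun w => fderiv ℝ u w 1) z 1 +
    fderiv ℝ (fun w => fderiv ℝ u w Complex.I) z Complex.I

/-!
A nonnegative harmonic function on the disc of radius `R` satisfies Harnack's inequality
`u(w) ≥ (R - |w|)/(R + |w|) · u(0)`: in the Poisson formula for `u(w)` the kernel is at least
`(R - |w|)/(R + |w|)` on the circle, and the remaining circle average of `u` is `u(0)` by the mean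
value property (first on slightly smaller closed discs, then letting the radius tend to `R`).
On the unit disc this gives `u(rP) ≥ (1 - r)/2 · u(0)`, so the difference quotient
`(u(rP) - u(P))/(r - 1)` stays below `-u(0)/2`.
-/

open scoped Laplacian in
theorem laplacian_eq_laplacian_of_contDiffAt {u : ℂ → ℝ} {z : ℂ} (hu : ContDiffAt ℝ 2 u z) :
    laplacian u z = Δ u z := by
  have hd : DifferentiableAt ℝ (fderiv ℝ u) z :=
    (hu.fderiv_right (m := 1) le_rfl).differentiableAt one_ne_zero
  simp [laplacian, InnerProductSpace.laplacian_eq_iteratedFDeriv_complexPlane,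
    iteratedFDeriv_two_apply, fderiv_clm_apply hd (differentiableAt_const _)]

theorem harmonicOnNhd_of_laplacian_eq_zero {u : ℂ → ℝ} {s : Set ℂ} (hs : IsOpen s)
    (hu : ContDiffOn ℝ 2 u s) (hΔ : ∀ z ∈ s, laplacian u z = 0) :
    InnerProductSpace.HarmonicOnNhd u s := by
  intro z hz
  refine ⟨hu.contDiffAt (hs.mem_nhds hz), ?_⟩
  filter_upwards [hs.mem_nhds hz] with w hw
  rw [← laplacian_eq_laplacian_of_contDiffAt (hu.contDiffAt (hs.mem_nhds hw)), hΔ w hw,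
    Pi.zero_apply]

theorem le_poissonKernel {c w z : ℂ} {R : ℝ} (hw : w ∈ ball c R) (hz : z ∈ sphere c R) :
    (R - ‖w - c‖) / (R + ‖w - c‖) ≤ poissonKernel c w z := by
  rw [mem_ball, dist_eq_norm] at hw
  rw [mem_sphere, dist_eq_norm] at hz
  have hd_lower : R - ‖w - c‖ ≤ ‖(z - c) - (w - c)‖ := by
    linarith [norm_sub_norm_le (z - c) (w - c)]
  have hd_upper : ‖(z - c) - (w - c)‖ ≤ R + ‖w - c‖ := by
    linarith [norm_sub_le (z - c) (w - c)]
  have hρ := norm_nonneg (w - c)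
  have hd_pos : 0 < ‖(z - c) - (w - c)‖ := by linarith
  rw [poissonKernel_def, hz, div_le_div_iff₀ (by linarith) (by positivity)]
  have : (R - ‖w - c‖) * ‖(z - c) - (w - c)‖ ^ 2 ≤ (R - ‖w - c‖) * (R + ‖w - c‖) ^ 2 := by
    gcongr
  nlinarith

theorem continuousOn_poissonKernel {c w : ℂ} {R : ℝ} (hw : w ∈ ball c R) :
    ContinuousOn (poissonKernel c w) (sphere c R) := by
  have hne : ∀ z ∈ sphere c R, ‖(z - c) - (w - c)‖ ^ 2 ≠ 0 := by
    intro z hz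
    have : z ≠ w := fun h => (sphere_disjoint_ball.ne_of_mem hz (h ▸ hw)) rfl
    simpa [sub_eq_zero] using this
  unfold poissonKernel
  exact ContinuousOn.div (by fun_prop) (by fun_prop) hne

open Real in
theorem InnerProductSpace.HarmonicOnNhd.harnack_closedBall {f : ℂ → ℝ} {c w : ℂ} {R : ℝ}
    (hf : HarmonicOnNhd f (closedBall c R)) (hf_nonneg : ∀ z ∈ sphere c R, 0 ≤ f z)
    (hw : w ∈ ball c R) :
    (R - ‖w - c‖) / (R + ‖w - c‖) * f c ≤ f w := by
  have hR : |R| = R := abs_of_pos (pos_of_mem_ball hw)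
  have hf_sphere : ContinuousOn f (sphere c R) := hf.continuousOn.mono sphere_subset_closedBall
  calc (R - ‖w - c‖) / (R + ‖w - c‖) * f c
      = circleAverage (((R - ‖w - c‖) / (R + ‖w - c‖)) • f) c R := by
        rw [circleAverage_smul, smul_eq_mul, HarmonicOnNhd.circleAverage_eq (by rwa [hR])]
    _ ≤ circleAverage (poissonKernel c w • f) c R := by
        refine circleAverage_mono ?_ ?_ fun z hz => ?_
        · exact (hf_sphere.const_smul _).circleIntegrable (pos_of_mem_ball hw).le
        · exact ((continuousOn_poissonKernel hw).smul hf_sphere).circleIntegrable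
            (pos_of_mem_ball hw).le
        · rw [hR] at hz
          exact mul_le_mul_of_nonneg_right (le_poissonKernel hw hz) (hf_nonneg z hz)
    _ = f w := hf.circleAverage_poissonKernel_smul hw

open Filter Topology in
theorem InnerProductSpace.HarmonicOnNhd.harnack_ball {f : ℂ → ℝ} {c w : ℂ} {R : ℝ}
    (hf : HarmonicOnNhd f (ball c R)) (hf_nonneg : ∀ z ∈ ball c R, 0 ≤ f z)
    (hw : w ∈ ball c R) :
    (R - ‖w - c‖) / (R + ‖w - c‖) * f c ≤ f w := by
  have hwR : ‖w - c‖ < R := mem_ball_iff_norm.1 hw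
  have h_inner : ∀ R' ∈ Set.Ioo ‖w - c‖ R, (R' - ‖w - c‖) / (R' + ‖w - c‖) * f c ≤ f w :=
    fun R' hR' => (hf.mono (closedBall_subset_ball hR'.2)).harnack_closedBall
      (fun z hz => hf_nonneg z (sphere_subset_ball hR'.2 hz)) (mem_ball_iff_norm.2 hR'.1)
  have h_lim : Tendsto (fun R' => (R' - ‖w - c‖) / (R' + ‖w - c‖) * f c) (𝓝[<] R)
      (𝓝 ((R - ‖w - c‖) / (R + ‖w - c‖) * f c)) := by
    refine (ContinuousAt.tendsto ?_).mono_left nhdsWithin_le_nhds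
    have : R + ‖w - c‖ ≠ 0 := by linarith [norm_nonneg (w - c)]
    fun_prop (disch := assumption)
  exact le_of_tendsto h_lim (eventually_of_mem (Ioo_mem_nhdsLT hwR) h_inner)

theorem hopf_lemma_unit_disc_general
    (u : ℂ → ℝ)
    (hsmooth : ContDiffOn ℝ 2 u (ball (0:ℂ) 1))
    (hharm : ∀ z ∈ ball (0:ℂ) 1, laplacian u z = 0)
    (hpos : ∀ z ∈ ball (0:ℂ) 1, 0 < u z)
    (P : ℂ) (hP : ‖P‖ = 1) (hP0 : u P = 0) :
    ∃ c' > (0:ℝ), ∃ r₀ : ℝ, r₀ < 1 ∧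
      ∀ r : ℝ, r₀ < r → r < 1 → (u ((r : ℂ) * P) - u P) / (r - 1) ≤ -c' := by
  have hu : InnerProductSpace.HarmonicOnNhd u (ball 0 1) :=
    harmonicOnNhd_of_laplacian_eq_zero isOpen_ball hsmooth hharm
  have hu0 : 0 < u 0 := hpos 0 (mem_ball_self one_pos)
  refine ⟨u 0 / 2, by positivity, 0, one_pos, fun r hr0 hr1 => ?_⟩
  have hrP : ‖(r : ℂ) * P - 0‖ = r := by
    rw [sub_zero, norm_mul, hP, mul_one, Complex.norm_real, Real.norm_of_nonneg hr0.le]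
  have harnack : (1 - r) / (1 + r) * u 0 ≤ u (r * P) := by
    have := hu.harnack_ball (fun z hz => (hpos z hz).le) (mem_ball_iff_norm.2 (hrP ▸ hr1))
    rwa [hrP] at this
  have h_ratio : (1 - r) / 2 ≤ (1 - r) / (1 + r) :=
    div_le_div_of_nonneg_left (by linarith) (by linarith) (by linarith)
  rw [hP0, sub_zero, div_le_iff_of_neg (by linarith)]
  nlinarith

theorem hopf_lemma_unit_disc
    (u : ℂ → ℝ)
    (hcont : ContinuousOn u (closedBall (0:ℂ) 1))
    (hsmooth : ContDiffOn ℝ 2 u (ball (0:ℂ) 1))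
    (hharm : ∀ z ∈ ball (0:ℂ) 1, laplacian u z = 0)
    (hnonconst : ¬ ∀ z ∈ ball (0:ℂ) 1, ∀ w ∈ ball (0:ℂ) 1, u z = u w)
    (hpos : ∀ z ∈ ball (0:ℂ) 1, 0 < u z)
    (P : ℂ) (hP : ‖P‖ = 1) (hP0 : u P = 0) :
    ∃ c' > (0:ℝ), ∃ r₀ : ℝ, r₀ < 1 ∧
      ∀ r : ℝ, r₀ < r → r < 1 → (u ((r : ℂ) * P) - u P) / (r - 1) ≤ -c' :=
  hopf_lemma_unit_disc_general u hsmooth hharm hpos P hP hP0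
end

section
/- Let Ω ⊆ ℂ be a domain and let φ : 𝒪(Ω) → ℂ be a character (a nonzero ℂ-algebra homomorphism). Set c = φ(id), where id(z) = z. Then c ∈ Ω and φ(g) = g(c) for every g ∈ 𝒪(Ω); that is, every character of 𝒪(Ω) is a point evaluation. -/
/-- The ℂ-algebra `𝒪(Ω)` of holomorphic functions on `Ω`, realized as the
subalgebra of `↥Ω → ℂ` of restrictions of functions holomorphic on `Ω`. -/
def holAlg (Ω : Set ℂ) : Subalgebra ℂ (↥Ω → ℂ) where
  carrier := {f | ∃ F : ℂ → ℂ, DifferentiableOn ℂ F Ω ∧ Ω.restrict F = f}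
  mul_mem' := by
    rintro f g ⟨F, hF, rfl⟩ ⟨G, hG, rfl⟩
    exact ⟨F * G, hF.mul hG, rfl⟩
  add_mem' := by
    rintro f g ⟨F, hF, rfl⟩ ⟨G, hG, rfl⟩
    exact ⟨F + G, hF.add hG, rfl⟩
  one_mem' := ⟨fun _ => 1, differentiableOn_const 1, rfl⟩
  zero_mem' := ⟨fun _ => 0, differentiableOn_const 0, rfl⟩
  algebraMap_mem' := fun c => ⟨fun _ => c, differentiableOn_const c, rfl⟩

/-- The identity function `z ↦ z` as an element of `𝒪(Ω)`. -/
def idElem (Ω : Set ℂ) : holAlg Ω :=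
  ⟨Ω.restrict id, ⟨id, differentiableOn_id, rfl⟩⟩

set_option synthInstance.maxHeartbeats 1000000 in
theorem character_is_point_evaluation
    (Ω : Set ℂ) (hΩopen : IsOpen Ω) (hΩconn : IsConnected Ω)
    (φ : holAlg Ω →ₐ[ℂ] ℂ) :
    ∃ hc : φ (idElem Ω) ∈ Ω,
      ∀ g : holAlg Ω, φ g = (g : ↥Ω → ℂ) ⟨φ (idElem Ω), hc⟩ := by
  classical
  set c := φ (idElem Ω) with hc_def
  have hcΩ : c ∈ Ω := by
    by_contra hc
    have hne : ∀ z : ℂ, z ∈ Ω → z - c ≠ 0 := fun z hz h =>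
      hc (by rw [sub_eq_zero] at h; exact h ▸ hz)
    have hinv : DifferentiableOn ℂ (fun z => (z - c)⁻¹) Ω :=
      (differentiableOn_id.sub_const c).inv hne
    let u : holAlg Ω := ⟨Ω.restrict fun z => (z - c)⁻¹, ⟨fun z => (z - c)⁻¹, hinv, rfl⟩⟩
    have h1 : (idElem Ω - algebraMap ℂ (holAlg Ω) c) * u = 1 := by
      apply Subtype.ext
      funext z
      show ((z : ℂ) - c) * ((z : ℂ) - c)⁻¹ = 1
      exact mul_inv_cancel₀ (hne z z.2)
    have h2 := congrArg φ h1
    simp only [map_mul, map_sub, map_one, AlgHom.commutes, Algebra.algebraMap_self_apply,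
      ← hc_def, sub_self, zero_mul] at h2
    exact zero_ne_one h2
  refine ⟨hcΩ, ?_⟩
  rintro ⟨f, G, hG, rfl⟩
  -- G̃ := dslope G c is holomorphic on Ω
  have hGt : DifferentiableOn ℂ (dslope G c) Ω := by
    intro x hx
    rcases eq_or_ne x c with heq | hne
    · rw [heq]
      have hA : AnalyticAt ℂ G c := hG.analyticAt (hΩopen.mem_nhds (heq ▸ hx))
      rcases hA with ⟨p, hp⟩
      exact (hp.has_fpower_series_dslope_fslope.analyticAt.differentiableAt).differentiableWithinAt
    · exact (differentiableWithinAt_dslope_of_ne hne).mpr (hG x hx)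
  let gt : holAlg Ω := ⟨Ω.restrict (dslope G c), ⟨dslope G c, hGt, rfl⟩⟩
  have hdecomp : (⟨Ω.restrict G, ⟨G, hG, rfl⟩⟩ : holAlg Ω) =
      algebraMap ℂ (holAlg Ω) (G c) + (idElem Ω - algebraMap ℂ (holAlg Ω) c) * gt := by
    apply Subtype.ext
    funext z
    show G z = G c + ((z : ℂ) - c) * dslope G c z
    have := sub_smul_dslope G c (z : ℂ)
    rw [smul_eq_mul] at this
    rw [this]; ring
  have := congrArg φ hdecomp
  rw [map_add, map_mul, map_sub, AlgHom.commutes, AlgHom.commutes] at this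
  simp only [Algebra.algebraMap_self_apply] at this
  rw [← hc_def, sub_self, zero_mul, add_zero] at this
  exact this
end

section
/- Bers's theorem: Let Ω, Ω̃ ⊆ ℂ be domains and φ : 𝒪(Ω) → 𝒪(Ω̃) a nonzero ℂ-algebra homomorphism. Then h := φ(id) is a holomorphic map from Ω̃ into Ω, and φ(f) = f ∘ h for every f ∈ 𝒪(Ω); moreover h is the unique map with this property. -/
theorem bers_theorem
    (Ω Ω' : Set ℂ) (hΩopen : IsOpen Ω) (hΩconn : IsConnected Ω)
    (hΩ'open : IsOpen Ω') (hΩ'conn : IsConnected Ω')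
    (φ : holAlg Ω →ₐ[ℂ] holAlg Ω') :
    ∃ h : ↥Ω' → ↥Ω,
      (∀ a : ↥Ω', (h a : ℂ) = (φ (idElem Ω) : ↥Ω' → ℂ) a) ∧
      (∃ H : ℂ → ℂ, DifferentiableOn ℂ H Ω' ∧ ∀ a : ↥Ω', (h a : ℂ) = H a) ∧
      (∀ f : holAlg Ω, ∀ a : ↥Ω', (φ f : ↥Ω' → ℂ) a = (f : ↥Ω → ℂ) (h a)) ∧
      (∀ h' : ↥Ω' → ↥Ω,
        (∀ f : holAlg Ω, ∀ a : ↥Ω', (φ f : ↥Ω' → ℂ) a = (f : ↥Ω → ℂ) (h' a)) → h' = h) := by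
  classical
  set χ : ↥Ω' → (holAlg Ω →ₐ[ℂ] ℂ) :=
    fun a => (Pi.evalAlgHom ℂ (fun _ => ℂ) a).comp ((holAlg Ω').val.comp φ) with hχdef
  have hχ_apply : ∀ (a : ↥Ω') (f : holAlg Ω), χ a f = (φ f : ↥Ω' → ℂ) a := fun a f => rfl
  have hmem : ∀ a : ↥Ω', χ a (idElem Ω) ∈ Ω := by
    intro a
    by_contra hw
    set w := χ a (idElem Ω) with hwdef
    have hg : DifferentiableOn ℂ (fun z => (z - w)⁻¹) Ω := by
      refine DifferentiableOn.inv (differentiableOn_id.sub (differentiableOn_const w)) ?_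
      intro z hz
      exact sub_ne_zero.2 (fun h => hw (h ▸ hz))
    set g : holAlg Ω := ⟨Ω.restrict (fun z => (z - w)⁻¹), ⟨_, hg, rfl⟩⟩ with hgdef
    have key : (idElem Ω - algebraMap ℂ (holAlg Ω) w) * g = 1 := by
      apply Subtype.ext
      funext z
      show ((z : ℂ) - w) * ((z : ℂ) - w)⁻¹ = 1
      exact mul_inv_cancel₀ (sub_ne_zero.2 fun h => hw (h ▸ z.2))
    have h2 := congrArg (χ a) key
    rw [map_mul, map_sub, AlgHom.commutes, map_one] at h2
    simp only [Algebra.algebraMap_self, RingHom.id_apply, ← hwdef, sub_self, zero_mul] at h2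
    exact zero_ne_one h2
  have hmain : ∀ (f : holAlg Ω) (a : ↥Ω'),
      χ a f = (f : ↥Ω → ℂ) ⟨χ a (idElem Ω), hmem a⟩ := by
    rintro ⟨f, F, hF, rfl⟩ a
    set w := χ a (idElem Ω) with hwdef
    have hwΩ : w ∈ Ω := hmem a
    have hgd : DifferentiableOn ℂ (dslope F w) Ω :=
      (Complex.differentiableOn_dslope (hΩopen.mem_nhds hwΩ)).2 hF
    set g : holAlg Ω := ⟨Ω.restrict (dslope F w), ⟨_, hgd, rfl⟩⟩ with hgdef
    have key : (⟨Ω.restrict F, F, hF, rfl⟩ : holAlg Ω) =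
        algebraMap ℂ (holAlg Ω) (F w) + (idElem Ω - algebraMap ℂ (holAlg Ω) w) * g := by
      apply Subtype.ext
      funext z
      show F z = F w + ((z : ℂ) - w) * dslope F w z
      have hs := sub_smul_dslope F w (z : ℂ)
      rw [smul_eq_mul] at hs
      rw [hs]; ring
    have h2 := congrArg (χ a) key
    rw [map_add, map_mul, map_sub, AlgHom.commutes, AlgHom.commutes] at h2
    simp only [Algebra.algebraMap_self, RingHom.id_apply, ← hwdef, sub_self, zero_mul,
      add_zero] at h2
    exact h2
  refine ⟨fun a => ⟨χ a (idElem Ω), hmem a⟩, fun a => rfl, ?_, ?_, ?_⟩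
  · obtain ⟨H, hH, hHr⟩ := (φ (idElem Ω)).2
    exact ⟨H, hH, fun a => (congrFun hHr a).symm⟩
  · intro f a
    exact hmain f a
  · intro h' hh'
    funext a
    apply Subtype.ext
    have := (hh' (idElem Ω) a).symm
    exact this
end

section
/- The algebras 𝒪(D) (holomorphic functions on the unit disc) and 𝒪(ℂ) (entire functions) are not isomorphic as ℂ-algebras. -/
/-!
The spectrum of `f ∈ 𝒪(Ω)` is its range, so a ℂ-algebra isomorphism `𝒪(D) ≃ 𝒪(ℂ)` would
carry `z ↦ z`, whose spectrum is the disc `D`, to an entire function with range `D`.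
Such a function is bounded, hence constant by Liouville, yet `D` is not a single point.
-/

namespace holAlg

variable {Ω : Set ℂ}

theorem isUnit_iff (f : holAlg Ω) : IsUnit f ↔ ∀ z, (f : Ω → ℂ) z ≠ 0 := by
  constructor
  · rintro ⟨u, rfl⟩ z hz
    have h : ((u * u⁻¹ : (holAlg Ω)ˣ) : Ω → ℂ) z = 1 := by rw [mul_inv_cancel]; rfl
    simp only [Units.val_mul, Subalgebra.coe_mul, Pi.mul_apply, hz, zero_mul] at h
    exact zero_ne_one h
  · intro hf
    obtain ⟨F, hF, hFf⟩ := f.2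
    have hF0 : ∀ z ∈ Ω, F z ≠ 0 := fun z hz => by
      rw [← hFf] at hf
      exact hf ⟨z, hz⟩
    refine IsUnit.of_mul_eq_one (b := ⟨_, F⁻¹, hF.inv hF0, rfl⟩) ?_
    ext z
    show (f : Ω → ℂ) z * (F z)⁻¹ = 1
    rw [← hFf]
    exact mul_inv_cancel₀ (hF0 z z.2)

theorem spectrum_eq_range (f : holAlg Ω) : spectrum ℂ f = Set.range (f : Ω → ℂ) := by
  ext c
  simp only [spectrum.mem_iff, isUnit_iff, not_forall, not_not, Set.mem_range]
  exact exists_congr fun z => sub_eq_zero.trans eq_comm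

theorem spectrum_idElem : spectrum ℂ (idElem Ω) = Ω := by
  rw [spectrum_eq_range]
  exact Subtype.range_coe

theorem subsingleton_spectrum_of_isBounded (f : holAlg Set.univ)
    (hf : Bornology.IsBounded (spectrum ℂ f)) : (spectrum ℂ f).Subsingleton := by
  obtain ⟨F, hF, hFf⟩ := f.2
  have hrange : Set.range (f : ↥(Set.univ : Set ℂ) → ℂ) = Set.range F := by
    rw [← hFf]
    exact Set.ext fun _ => ⟨fun ⟨z, hz⟩ => ⟨z, hz⟩, fun ⟨z, hz⟩ => ⟨⟨z, trivial⟩, hz⟩⟩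
  rw [spectrum_eq_range, hrange] at hf ⊢
  rintro _ ⟨z, rfl⟩ _ ⟨w, rfl⟩
  exact (differentiableOn_univ.mp hF).apply_eq_apply_of_bounded hf z w

end holAlg

theorem disc_and_plane_algebras_not_isomorphic :
    IsEmpty (holAlg (Metric.ball (0:ℂ) 1) ≃ₐ[ℂ] holAlg (Set.univ : Set ℂ)) := by
  refine ⟨fun e => ?_⟩
  have hspec : spectrum ℂ (e (idElem _)) = Metric.ball 0 1 := by
    rw [AlgEquiv.spectrum_eq, holAlg.spectrum_idElem]
  have hsub := holAlg.subsingleton_spectrum_of_isBounded (e (idElem _))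
    (by rw [hspec]; exact Metric.isBounded_ball)
  rw [hspec] at hsub
  exact (infinite_of_mem_nhds (0 : ℂ) (Metric.ball_mem_nhds 0 one_pos)).nontrivial.not_subsingleton
    hsub
end
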